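/- Weak forcing is invariant under elementary extension: defining A ⊩* ψ(ā) as A ⊩ ¬¬ψ(ā), if A ⪯ B then for any infinitary formula ψ and ā ∈ A, A ⊩* ψ(ā) if and only if B ⊩* ψ(ā). -/

import Mathlib

/-!
`A ⊩ ¬¬ψ(ā)` says that the conditions forcing `ψ(ā)` are dense above `A`: every elementary
extension of `A` has a further one forcing `ψ(ā)`. If `A ⪯ B`, every extension of `B` is one of
`A`, so density above `A` gives density above `B`. Conversely, given `N ⪰ A`, the elementary
amalgamation theorem yields `Q` extending both `N` and `B` over `A`, and density above `B`
gives `P ⪰ Q ⪰ N` forcing `ψ(ā)`.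

Amalgamating `A ⪯ B` and `A ⪯ C` is a compactness argument: once the elements of `A` are named
by constants, `B` and `C` are elementarily equivalent, so every finite part of the elementary
diagram of one is realized in the other, and both embed elementarily into a model of the union
of the two diagrams.
-/

open FirstOrder

universe u

namespace InfinitaryForcing

variable (L : FirstOrder.Language.{u, u})

/-- Infinitary formulas of `L_{∞,ω}`: set-indexed conjunctions and disjunctions,
finitary quantification, free variables among `Fin n`. -/
inductive InfForm : ℕ → Type (u + 1)
  | equal {n : ℕ} (t₁ t₂ : L.Term (Fin n)) : InfForm n
  | rel {n l : ℕ} (R : L.Relations l) (ts : Fin l → L.Term (Fin n)) : InfForm n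
  | not {n : ℕ} (φ : InfForm n) : InfForm n
  | disj {n : ℕ} {ι : Type u} (Φ : ι → InfForm n) : InfForm n
  | conj {n : ℕ} {ι : Type u} (Φ : ι → InfForm n) : InfForm n
  | ex {n : ℕ} (φ : InfForm (n + 1)) : InfForm n
  | all {n : ℕ} (φ : InfForm (n + 1)) : InfForm n

variable {L}

/-- Tarskian satisfaction for infinitary formulas. -/
def Realize : ∀ {n : ℕ}, InfForm L n → ∀ (M : Type u), L.Structure M → (Fin n → M) → Prop
  | _, .equal t₁ t₂, _M, S, v => letI := S; t₁.realize v = t₂.realize v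
  | _, .rel R ts, _M, S, v => letI := S; Language.Structure.RelMap R fun i => (ts i).realize v
  | _, .not φ, M, S, v => ¬ Realize φ M S v
  | _, .disj Φ, M, S, v => ∃ i, Realize (Φ i) M S v
  | _, .conj Φ, M, S, v => ∀ i, Realize (Φ i) M S v
  | _, .ex φ, M, S, v => ∃ b : M, Realize φ M S (Fin.snoc v b)
  | _, .all φ, M, S, v => ∀ b : M, Realize φ M S (Fin.snoc v b)

/-- Elementary embeddings, with the structures made explicit. -/
abbrev ElemEmb (M N : Type u) (SM : L.Structure M) (SN : L.Structure N) : Type u :=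
  @FirstOrder.Language.ElementaryEmbedding L M N SM SN

/-- The strong forcing relation `A ⊩ ψ(ā)`, where conditions are structures
ordered by elementary extension. -/
def Forces : ∀ {n : ℕ}, InfForm L n → ∀ (M : Type u), L.Structure M → (Fin n → M) → Prop
  | _, .equal t₁ t₂, _M, S, v => letI := S; t₁.realize v = t₂.realize v
  | _, .rel R ts, _M, S, v => letI := S; Language.Structure.RelMap R fun i => (ts i).realize v
  | _, .not φ, M, S, v =>
      ∀ (N : Type u) (SN : L.Structure N) (f : ElemEmb M N S SN),
        ¬ Forces φ N SN (fun i => f.toFun (v i))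
  | _, .disj Φ, M, S, v => ∃ i, Forces (Φ i) M S v
  | _, .conj Φ, M, S, v =>
      ∀ (N : Type u) (SN : L.Structure N) (f : ElemEmb M N S SN) (i : _),
        ∃ (P : Type u) (SP : L.Structure P) (g : ElemEmb N P SN SP),
          Forces (Φ i) P SP (fun k => g.toFun (f.toFun (v k)))
  | _, .ex φ, M, S, v => ∃ b : M, Forces φ M S (Fin.snoc v b)
  | _, .all φ, M, S, v =>
      ∀ (N : Type u) (SN : L.Structure N) (f : ElemEmb M N S SN) (b : N),
        ∃ (P : Type u) (SP : L.Structure P) (g : ElemEmb N P SN SP),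
          Forces φ P SP (Fin.snoc (fun k => g.toFun (f.toFun (v k))) (g.toFun b))

/-- `M` decides `ψ(v)` if it strongly forces `ψ(v)` or `¬ψ(v)`. -/
def Decides {n : ℕ} (ψ : InfForm L n) (M : Type u) (S : L.Structure M) (v : Fin n → M) : Prop :=
  Forces ψ M S v ∨ Forces ψ.not M S v

/-- The weak forcing relation `A ⊩* ψ := A ⊩ ¬¬ψ`. -/
def WForces {n : ℕ} (ψ : InfForm L n) (M : Type u) (S : L.Structure M) (v : Fin n → M) : Prop :=
  Forces ψ.not.not M S v

variable (L)

/-- Finitary (`L_{ω,ω}`) formulas among the infinitary ones. -/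
inductive InfForm.IsFinitary : ∀ {n : ℕ}, InfForm L n → Prop
  | equal {n} (t₁ t₂ : L.Term (Fin n)) : IsFinitary (.equal t₁ t₂)
  | rel {n l} (R : L.Relations l) (ts : Fin l → L.Term (Fin n)) : IsFinitary (.rel R ts)
  | not {n} {φ : InfForm L n} : IsFinitary φ → IsFinitary φ.not
  | disj {n} {ι : Type u} (_ : Finite ι) {Φ : ι → InfForm L n} :
      (∀ i, IsFinitary (Φ i)) → IsFinitary (.disj Φ)
  | conj {n} {ι : Type u} (_ : Finite ι) {Φ : ι → InfForm L n} :
      (∀ i, IsFinitary (Φ i)) → IsFinitary (.conj Φ)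
  | ex {n} {φ : InfForm L (n + 1)} : IsFinitary φ → IsFinitary φ.ex
  | all {n} {φ : InfForm L (n + 1)} : IsFinitary φ → IsFinitary φ.all

/-- Quantifier-free infinitary formulas. -/
inductive InfForm.IsQF : ∀ {n : ℕ}, InfForm L n → Prop
  | equal {n} (t₁ t₂ : L.Term (Fin n)) : IsQF (.equal t₁ t₂)
  | rel {n l} (R : L.Relations l) (ts : Fin l → L.Term (Fin n)) : IsQF (.rel R ts)
  | not {n} {φ : InfForm L n} : IsQF φ → IsQF φ.not
  | disj {n} {ι : Type u} {Φ : ι → InfForm L n} : (∀ i, IsQF (Φ i)) → IsQF (.disj Φ)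
  | conj {n} {ι : Type u} {Φ : ι → InfForm L n} : (∀ i, IsQF (Φ i)) → IsQF (.conj Φ)

/-- `L_{ω₁,ω}` formulas: all conjunctions and disjunctions are countable. -/
inductive InfForm.IsCtble : ∀ {n : ℕ}, InfForm L n → Prop
  | equal {n} (t₁ t₂ : L.Term (Fin n)) : IsCtble (.equal t₁ t₂)
  | rel {n l} (R : L.Relations l) (ts : Fin l → L.Term (Fin n)) : IsCtble (.rel R ts)
  | not {n} {φ : InfForm L n} : IsCtble φ → IsCtble φ.not
  | disj {n} {ι : Type u} (_ : Countable ι) {Φ : ι → InfForm L n} :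
      (∀ i, IsCtble (Φ i)) → IsCtble (.disj Φ)
  | conj {n} {ι : Type u} (_ : Countable ι) {Φ : ι → InfForm L n} :
      (∀ i, IsCtble (Φ i)) → IsCtble (.conj Φ)
  | ex {n} {φ : InfForm L (n + 1)} : IsCtble φ → IsCtble φ.ex
  | all {n} {φ : InfForm L (n + 1)} : IsCtble φ → IsCtble φ.all

/-- A fragment of `L_{∞,ω}`: a family of sets of formulas closed under negation
and subformulas. -/
structure IsFragment (𝔸 : ∀ n : ℕ, Set (InfForm L n)) : Prop where
  not_mem : ∀ {n} {φ : InfForm L n}, φ ∈ 𝔸 n → φ.not ∈ 𝔸 n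
  of_not : ∀ {n} {φ : InfForm L n}, φ.not ∈ 𝔸 n → φ ∈ 𝔸 n
  of_disj : ∀ {n} {ι : Type u} {Φ : ι → InfForm L n}, InfForm.disj Φ ∈ 𝔸 n → ∀ i, Φ i ∈ 𝔸 n
  of_conj : ∀ {n} {ι : Type u} {Φ : ι → InfForm L n}, InfForm.conj Φ ∈ 𝔸 n → ∀ i, Φ i ∈ 𝔸 n
  of_ex : ∀ {n} {φ : InfForm L (n + 1)}, φ.ex ∈ 𝔸 n → φ ∈ 𝔸 (n + 1)
  of_all : ∀ {n} {φ : InfForm L (n + 1)}, φ.all ∈ 𝔸 n → φ ∈ 𝔸 (n + 1)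

variable {L}

/-- `G` is `𝔸`-generic if it decides every instance of every formula of `𝔸`. -/
def IsGeneric (𝔸 : ∀ n : ℕ, Set (InfForm L n)) (G : Type u) (SG : L.Structure G) : Prop :=
  ∀ (n : ℕ) (ψ : InfForm L n), ψ ∈ 𝔸 n → ∀ v : Fin n → G, Decides ψ G SG v

variable (L)

mutual
  /-- Finitary `∃ₙ` formulas: `n` alternating blocks of quantifiers beginning
  with existentials, counting finite conjunctions/disjunctions as free. -/
  inductive IsEx : ℕ → ∀ {k : ℕ}, InfForm L k → Prop
    | equal {m k} (t₁ t₂ : L.Term (Fin k)) : IsEx m (.equal t₁ t₂)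
    | rel {m k l} (R : L.Relations l) (ts : Fin l → L.Term (Fin k)) : IsEx m (.rel R ts)
    | not {m k} {φ : InfForm L k} : IsAll m φ → IsEx m φ.not
    | disj {m k} {ι : Type u} (_ : Finite ι) {Φ : ι → InfForm L k} :
        (∀ i, IsEx m (Φ i)) → IsEx m (.disj Φ)
    | conj {m k} {ι : Type u} (_ : Finite ι) {Φ : ι → InfForm L k} :
        (∀ i, IsEx m (Φ i)) → IsEx m (.conj Φ)
    | ex {m k} {φ : InfForm L (k + 1)} : IsEx m φ → 1 ≤ m → IsEx m φ.ex
    | exStep {m k} {φ : InfForm L (k + 1)} : IsAll m φ → IsEx (m + 1) φ.ex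

  /-- Finitary `∀ₙ` formulas. -/
  inductive IsAll : ℕ → ∀ {k : ℕ}, InfForm L k → Prop
    | equal {m k} (t₁ t₂ : L.Term (Fin k)) : IsAll m (.equal t₁ t₂)
    | rel {m k l} (R : L.Relations l) (ts : Fin l → L.Term (Fin k)) : IsAll m (.rel R ts)
    | not {m k} {φ : InfForm L k} : IsEx m φ → IsAll m φ.not
    | disj {m k} {ι : Type u} (_ : Finite ι) {Φ : ι → InfForm L k} :
        (∀ i, IsAll m (Φ i)) → IsAll m (.disj Φ)
    | conj {m k} {ι : Type u} (_ : Finite ι) {Φ : ι → InfForm L k} :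
        (∀ i, IsAll m (Φ i)) → IsAll m (.conj Φ)
    | all {m k} {φ : InfForm L (k + 1)} : IsAll m φ → 1 ≤ m → IsAll m φ.all
    | allStep {m k} {φ : InfForm L (k + 1)} : IsEx m φ → IsAll (m + 1) φ.all
end

/-- `f : A → B` is an `n`-elementary map (`A ⪯ₙ B` when `f` is an inclusion):
every finitary `∃ₙ` or `∀ₙ` formula transfers along `f`. -/
def IsNElemMap (n : ℕ) {A B : Type u} (SA : L.Structure A) (SB : L.Structure B)
    (f : A → B) : Prop :=
  ∀ (k : ℕ) (φ : InfForm L k), (IsEx L n φ ∨ IsAll L n φ) →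
    ∀ v : Fin k → A, Realize φ A SA v ↔ Realize φ B SB (fun i => f (v i))

/-- `f : A → B` is an elementary map: every finitary formula transfers along `f`. -/
def IsElemMap {A B : Type u} (SA : L.Structure A) (SB : L.Structure B)
    (f : A → B) : Prop :=
  ∀ (k : ℕ) (φ : InfForm L k), InfForm.IsFinitary L φ →
    ∀ v : Fin k → A, Realize φ A SA v ↔ Realize φ B SB (fun i => f (v i))

end InfinitaryForcing

universe v w

namespace FirstOrder.Language

open Theory

variable {L : Language.{u, v}} {M N : Type w} [L.Structure M] [L.Structure N]

def ElementaryEmbedding.ofRightInverse (e : M ↪ₑ[L] N) (s : N → M)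
    (hs : Function.RightInverse s e) : N ↪ₑ[L] M where
  toFun := s
  map_formula' n φ x := by
    rw [← e.map_formula, ← Function.comp_assoc, hs.comp_eq_id, Function.id_comp]

def ElementaryEmbedding.reduct {L' : Language} [L'.Structure M] [L'.Structure N] (ϕ : L →ᴸ L')
    [ϕ.IsExpansionOn M] [ϕ.IsExpansionOn N] (e : M ↪ₑ[L'] N) : M ↪ₑ[L] N where
  toFun := e
  map_formula' n φ x := by
    rw [← ϕ.realize_onFormula, ← ϕ.realize_onFormula]
    exact e.map_formula _ x

theorem ElementaryEmbedding.elementarilyEquivalent_withConstants {A : Type*} [L.Structure A]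
    (f : A ↪ₑ[L] M) : letI := constantsOn.structure f; A ≅[L[[A]]] M := by
  let := constantsOn.structure f
  refine elementarilyEquivalent_iff.2 fun σ => ?_
  rw [← Formula.realize_equivSentence_symm_con, ← Formula.realize_equivSentence_symm_con]
  exact (f.map_formula _ _).symm

theorem exists_realize_withConstants_of_elementarilyEquivalent [Nonempty M] (h : M ≅[L] N)
    {σ : L[[N]].Sentence} (hσ : N ⊨ σ) :
    ∃ w : N → M, letI := constantsOn.structure w; M ⊨ σ := by
  classical
  obtain ⟨φ, rfl⟩ := Formula.equivSentence.surjective σ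
  exact Formula.exists_realize_equivSentence_iff_realize_exClosure.2
    ((h.realize_sentence _).2 (Formula.realize_exClosure_of_realize_equivSentence hσ))

theorem isSatisfiable_union_elementaryDiagram_of_elementarilyEquivalent [Nonempty M]
    (h : M ≅[L] N) :
    ((L.lhomWithConstantsMap (Sum.inl : M → M ⊕ N)).onTheory (L.elementaryDiagram M) ∪
      (L.lhomWithConstantsMap (Sum.inr : N → M ⊕ N)).onTheory
        (L.elementaryDiagram N)).IsSatisfiable := by
  classical
  set φM := L.lhomWithConstantsMap (Sum.inl : M → M ⊕ N)
  set φN := L.lhomWithConstantsMap (Sum.inr : N → M ⊕ N)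
  rw [isSatisfiable_iff_isFinitelySatisfiable]
  intro T0 hT0
  obtain ⟨s, hsN, hs⟩ : ∃ s : Finset L[[N]].Sentence, ↑s ⊆ L.elementaryDiagram N ∧
      ↑T0 ⊆ φM.onTheory (L.elementaryDiagram M) ∪ φN.onTheory ↑s := by
    obtain ⟨s, hsN, hs⟩ := Finset.subset_set_image_iff.1
      (fun τ hτ => (hT0 (Finset.mem_filter.1 hτ).1).resolve_left (Finset.mem_filter.1 hτ).2 :
        ↑(T0.filter (· ∉ φM.onTheory (L.elementaryDiagram M))) ⊆
          φN.onSentence '' L.elementaryDiagram N)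
    refine ⟨s, hsN, fun τ hτ => or_iff_not_imp_left.2 fun hτM => ?_⟩
    have : τ ∈ s.image φN.onSentence := hs ▸ Finset.mem_filter.2 ⟨hτ, hτM⟩
    simpa [LHom.onTheory] using this
  have hσ : N ⊨ Formula.iInf (fun τ : s => (τ : L[[N]].Sentence)) := by
    simp only [Sentence.Realize, Formula.realize_iInf]
    exact fun τ => hsN τ.2
  obtain ⟨w, hw⟩ := exists_realize_withConstants_of_elementarilyEquivalent h hσ
  let : (constantsOn N).Structure M := constantsOn.structure w
  let : (constantsOn (M ⊕ N)).Structure M := constantsOn.structure (Sum.elim id w)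
  have : (LHom.constantsOnMap (Sum.inl : M → M ⊕ N)).IsExpansionOn M :=
    constantsOnMap_isExpansionOn rfl
  have : (LHom.constantsOnMap (Sum.inr : N → M ⊕ N)).IsExpansionOn M :=
    constantsOnMap_isExpansionOn rfl
  have : φM.IsExpansionOn M := LHom.sumMap_isExpansionOn _ _ M
  have : φN.IsExpansionOn M := LHom.sumMap_isExpansionOn _ _ M
  have hMs : M ⊨ (↑s : L[[N]].Theory) := by
    simp only [Sentence.Realize, Formula.realize_iInf] at hw
    exact (model_iff _).2 fun τ hτ => hw ⟨τ, hτ⟩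
  have : M ⊨ φM.onTheory (L.elementaryDiagram M) ∪ φN.onTheory ↑s :=
    ((φM.onTheory_model _).2 inferInstance).union ((φN.onTheory_model _).2 hMs)
  exact (Model.isSatisfiable M).mono hs

theorem exists_elementaryEmbeddings_of_elementarilyEquivalent [Nonempty M] (h : M ≅[L] N) :
    ∃ (P : Type (max u v w)) (_ : L.Structure P), Nonempty (M ↪ₑ[L] P) ∧ Nonempty (N ↪ₑ[L] P) := by
  obtain ⟨P⟩ := isSatisfiable_union_elementaryDiagram_of_elementarilyEquivalent h
  let : L.Structure P := (L.lhomWithConstants (M ⊕ N)).reduct P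
  let : L[[M]].Structure P := (L.lhomWithConstantsMap (Sum.inl : M → M ⊕ N)).reduct P
  let : L[[N]].Structure P := (L.lhomWithConstantsMap (Sum.inr : N → M ⊕ N)).reduct P
  have : (L.lhomWithConstants M).IsExpansionOn P := ⟨fun _ _ => rfl, fun _ _ => rfl⟩
  have : (L.lhomWithConstants N).IsExpansionOn P := ⟨fun _ _ => rfl, fun _ _ => rfl⟩
  have : P ⊨ L.elementaryDiagram M :=
    (LHom.onTheory_model _ _).1 (P.is_model.mono Set.subset_union_left)
  have : P ⊨ L.elementaryDiagram N :=
    (LHom.onTheory_model _ _).1 (P.is_model.mono Set.subset_union_right)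
  exact ⟨P, _, ⟨ElementaryEmbedding.ofModelsElementaryDiagram L M P⟩,
    ⟨ElementaryEmbedding.ofModelsElementaryDiagram L N P⟩⟩

theorem ElementaryEmbedding.exists_amalgamation {A B C : Type (max u v)} [L.Structure A]
    [L.Structure B] [L.Structure C] (f : A ↪ₑ[L] B) (g : A ↪ₑ[L] C) :
    ∃ (P : Type (max u v)) (_ : L.Structure P) (f' : B ↪ₑ[L] P) (g' : C ↪ₑ[L] P),
      ∀ a, f' (f a) = g' (g a) := by
  -- compactness only produces nonempty models, so the empty case is handled by hand
  rcases isEmpty_or_nonempty C with hC | hC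
  · have : IsEmpty A := Function.isEmpty g
    exact ⟨B, _, ElementaryEmbedding.refl L B,
      f.comp (g.ofRightInverse isEmptyElim isEmptyElim), isEmptyElim⟩
  let : (constantsOn A).Structure B := constantsOn.structure f
  let : (constantsOn A).Structure C := constantsOn.structure g
  have hCB : C ≅[L[[A]]] B :=
    g.elementarilyEquivalent_withConstants.symm.trans f.elementarilyEquivalent_withConstants
  obtain ⟨P, _, ⟨g'⟩, ⟨f'⟩⟩ := exists_elementaryEmbeddings_of_elementarilyEquivalent hCB
  let : L.Structure P := (L.lhomWithConstants A).reduct P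
  exact ⟨P, _, f'.reduct (L.lhomWithConstants A), g'.reduct (L.lhomWithConstants A),
    fun a => (f'.map_constants (L.con a)).trans (g'.map_constants (L.con a)).symm⟩

end FirstOrder.Language

namespace InfinitaryForcing

theorem wForces_iff {L : FirstOrder.Language.{u, u}} {n : ℕ} {ψ : InfForm L n} {M : Type u}
    {S : L.Structure M} {v : Fin n → M} :
    WForces ψ M S v ↔ ∀ (N : Type u) (SN : L.Structure N) (g : ElemEmb M N S SN),
      ∃ (P : Type u) (SP : L.Structure P) (k : ElemEmb N P SN SP),
        Forces ψ P SP (fun i => k (g (v i))) := by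
  simp only [WForces, Forces, not_forall, not_not]
  rfl

/-- Weak forcing (`A ⊩* ψ := A ⊩ ¬¬ψ`) is invariant under elementary extension:
if `A ⪯ B` then `A ⊩* ψ(ā)` iff `B ⊩* ψ(ā)`. -/
theorem stmt11 {L : FirstOrder.Language.{u, u}} {n : ℕ} (ψ : InfForm L n)
    {A B : Type u} (SA : L.Structure A) (SB : L.Structure B) (f : ElemEmb A B SA SB)
    (v : Fin n → A) :
    WForces ψ A SA v ↔ WForces ψ B SB (fun i => f.toFun (v i)) := by
  rw [wForces_iff, wForces_iff]
  constructor
  · intro hA N SN g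
    exact hA N SN (g.comp f)
  · intro hB N SN g
    obtain ⟨Q, SQ, eN, eB, hcomm⟩ := g.exists_amalgamation f
    obtain ⟨P, SP, k, hP⟩ := hB Q SQ eB
    refine ⟨P, SP, k.comp eN, ?_⟩
    convert hP using 2 with i
    exact congrArg k (hcomm (v i))

end InfinitaryForcing
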